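/- Let ℓ₂ be the line in ℝ³ through (0, 0, 1) with direction (0, 1, 0), and let x, y, t, u be real numbers with (t, 1 − t − u) ≠ (0, 0) (so that the direction (t, u, 1 − t − u) is nonzero and not parallel to (0, 1, 0)). Let ℓ be the line through (x, y, 0) with direction (t, u, 1 − t − u). Then the distance between ℓ₂ and ℓ equals 2 if and only if x²t² + 2x²tu − 2x²t + x²u² − 2x²u + x² − 2xtu − 2xt² + 2xt − 4u² − 8tu + 8t − 7t² + 8u − 4 = 0. -/

import Mathlib

/-
Points of the two lines are `(0, s, 1)` and `(x + s't, y + s'u, s'c)` with `c = 1 - t - u`. The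
`y`-coordinate can always be matched by the choice of `s`, so the distance of the lines is the
distance from the origin to the planar line through `(x, -1)` with direction `(t, c)`, which
Lagrange's identity computes as `|xc + t| / √(t² + c²)`. Setting it equal to `2` and clearing the
square root gives `(xc + t)² = 4 (t² + c²)`, the displayed polynomial equation.
-/

noncomputable section

/-- The point/vector `(a, b, c)` in ℝ³ (Euclidean space). -/
def vec3 (a b c : ℝ) : EuclideanSpace ℝ (Fin 3) :=
  (WithLp.equiv 2 (Fin 3 → ℝ)).symm ![a, b, c]

/-- The line in ℝ³ through the point `P` with direction vector `w`:
the set `{P + s • w : s ∈ ℝ}`. -/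
def lineThrough (P w : EuclideanSpace ℝ (Fin 3)) : Set (EuclideanSpace ℝ (Fin 3)) :=
  Set.range fun s : ℝ => P + s • w

/-- `ℓ` is a line in ℝ³: a one-dimensional affine subspace, i.e. a set of the form
`{P + s • w : s ∈ ℝ}` for some point `P` and nonzero direction vector `w`. -/
def IsLine (ℓ : Set (EuclideanSpace ℝ (Fin 3))) : Prop :=
  ∃ P w : EuclideanSpace ℝ (Fin 3), w ≠ 0 ∧ ℓ = lineThrough P w

/-- The distance between two sets in ℝ³: the infimum of the Euclidean distances
between points of `s` and points of `t`. -/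
def setDist (s t : Set (EuclideanSpace ℝ (Fin 3))) : ℝ :=
  sInf (Set.image2 dist s t)

lemma vec3_add_smul (a b c s d e f : ℝ) :
    vec3 a b c + s • vec3 d e f = vec3 (a + s * d) (b + s * e) (c + s * f) := by
  ext i; fin_cases i <;> simp [vec3]

lemma dist_vec3 (a b c d e f : ℝ) :
    dist (vec3 a b c) (vec3 d e f) = √((a - d) ^ 2 + (b - e) ^ 2 + (c - f) ^ 2) := by
  simp [vec3, EuclideanSpace.dist_eq, Fin.sum_univ_three, Real.dist_eq, sq_abs]

section PlanarLine

variable {p q t c : ℝ}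

lemma sq_cross_div_le_sq_add_sq (hD : 0 < t ^ 2 + c ^ 2) (s : ℝ) :
    (p * c - q * t) ^ 2 / (t ^ 2 + c ^ 2) ≤ (p + s * t) ^ 2 + (q + s * c) ^ 2 := by
  have lagrange : ((p + s * t) ^ 2 + (q + s * c) ^ 2) * (t ^ 2 + c ^ 2)
      = (p * c - q * t) ^ 2 + ((p + s * t) * t + (q + s * c) * c) ^ 2 := by ring
  rw [div_le_iff₀ hD, lagrange]
  exact le_add_of_nonneg_right (sq_nonneg _)

lemma exists_sq_add_sq_eq_sq_cross_div (hD : 0 < t ^ 2 + c ^ 2) :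
    ∃ s, (p + s * t) ^ 2 + (q + s * c) ^ 2 = (p * c - q * t) ^ 2 / (t ^ 2 + c ^ 2) := by
  refine ⟨-(p * t + q * c) / (t ^ 2 + c ^ 2), ?_⟩
  field_simp
  ring

end PlanarLine

lemma dist_line2_point_line_point (x y t u c s s' : ℝ) :
    dist (vec3 0 0 1 + s • vec3 0 1 0) (vec3 x y 0 + s' • vec3 t u c)
      = √((x + s' * t) ^ 2 + (-1 + s' * c) ^ 2 + (s - (y + s' * u)) ^ 2) := by
  rw [vec3_add_smul, vec3_add_smul, dist_vec3]
  ring_nf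

lemma setDist_line2_line (x y t u c : ℝ) (hD : 0 < t ^ 2 + c ^ 2) :
    setDist (lineThrough (vec3 0 0 1) (vec3 0 1 0)) (lineThrough (vec3 x y 0) (vec3 t u c))
      = √((x * c + t) ^ 2 / (t ^ 2 + c ^ 2)) := by
  have cross : x * c + t = x * c - (-1) * t := by ring
  refine IsLeast.csInf_eq ⟨?_, ?_⟩
  · obtain ⟨s', foot⟩ := exists_sq_add_sq_eq_sq_cross_div (p := x) (q := -1) hD
    refine ⟨_, ⟨y + s' * u, rfl⟩, _, ⟨s', rfl⟩, ?_⟩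
    rw [dist_line2_point_line_point, sub_self, cross, ← foot]
    norm_num
  · rintro _ ⟨_, ⟨s, rfl⟩, _, ⟨s', rfl⟩, rfl⟩
    rw [dist_line2_point_line_point, cross]
    exact Real.sqrt_le_sqrt <|
      (sq_cross_div_le_sq_add_sq hD s').trans (le_add_of_nonneg_right (sq_nonneg _))

/-- Let `ℓ₂` be the line through `(0,0,1)` with direction `(0,1,0)`, and `ℓ` the line
through `(x,y,0)` with direction `(t,u,1−t−u)`, where `(t, 1−t−u) ≠ (0,0)`. Then
`d(ℓ₂, ℓ) = 2` iff the following polynomial equation holds. -/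
theorem dist_line2_eq_two_iff
    (x y t u : ℝ) (h : (t, 1 - t - u) ≠ (0, 0)) :
    setDist (lineThrough (vec3 0 0 1) (vec3 0 1 0))
        (lineThrough (vec3 x y 0) (vec3 t u (1 - t - u))) = 2 ↔
      x ^ 2 * t ^ 2 + 2 * x ^ 2 * t * u - 2 * x ^ 2 * t + x ^ 2 * u ^ 2 - 2 * x ^ 2 * u
          + x ^ 2 - 2 * x * t * u - 2 * x * t ^ 2 + 2 * x * t
          - 4 * u ^ 2 - 8 * t * u + 8 * t - 7 * t ^ 2 + 8 * u - 4 = 0 := by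
  have hD : 0 < t ^ 2 + (1 - t - u) ^ 2 := by
    rw [Ne, Prod.ext_iff, not_and_or] at h
    rcases h with ht | hc <;> positivity
  rw [setDist_line2_line x y t u _ hD,
    Real.sqrt_eq_iff_eq_sq (by positivity) zero_le_two, div_eq_iff hD.ne']
  constructor <;> intro heq <;> linarith
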